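/- arXiv:1706.09156 — 2 statements merged into one kernel-verified Lean document; each statement's English description precedes it below -/
import Mathlib

section
/- SVRG-type instance of the P-L bound (consequence of Theorem 3 noted in the text). Suppose each ∇f_i is L-Lipschitz (Assumption A1) and f satisfies the P-L condition with constant μ > 0. Run SCSG with B_j ≡ n, b_j ≡ 1 and η_j L = γ n^{−2/3} for some 0 < γ ≤ 1/3, with n ≥ 8. Then E( f(x̃_T) − f* ) ≤ ( 5L / ( μ γ n^{1/3} + 5L ) )^T · Δ_f. -/
/-!
With `B = n` the snapshot gradient is exact, so the inner direction
`ν = ∇f_i(z) - ∇f_i(x̃) + ∇f(x̃)` is unbiased with second moment at most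
`‖∇f(z)‖² + L²‖z - x̃‖²`. The descent lemma, Young's inequality and the P-L condition then show
that `V(z) = f(z) - f* + γ² t L ‖z - x̃‖²`, with `t = n^(-1/3)`, satisfies
`E V(z⁺) + (1/n + ημ)(f(z) - f*) ≤ (1 + 1/n) V(z)` along one inner step. The epoch length is
geometric with parameter `(1 + 1/n)⁻¹`, so weighting this recursion by `P(N = k)` telescopes to
`E(f(x̃_j) - f*) ≤ (f(x̃_{j-1}) - f*) / (1 + nημ)`, and `1 / (1 + nημ) = L / (L + μγn^(1/3))`
is below the claimed factor.
-/

open scoped BigOperators ENNReal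

noncomputable section

namespace SCSG

/-- The ambient Euclidean space. -/
abbrev Vec (d : ℕ) := EuclideanSpace ℝ (Fin d)

/-- The finite-sum objective `f(x) = (1/n) ∑ f_i(x)`. -/
def avg (n d : ℕ) (f : Fin n → Vec d → ℝ) : Vec d → ℝ :=
  fun x => (∑ i, f i x) / n

/-- Batch gradient `∇f_I(x) = |I|⁻¹ ∑_{i∈I} ∇f_i(x)`. -/
def gradBatch {n d : ℕ} (f : Fin n → Vec d → ℝ) (I : Finset (Fin n)) (x : Vec d) : Vec d :=
  (I.card : ℝ)⁻¹ • ∑ i ∈ I, gradient (f i) x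

/-- Uniform distribution over size-`m` subsets of `{1,…,n}`. -/
def unifSubsets (n m : ℕ) : PMF (Finset (Fin n)) :=
  if h : (Finset.powersetCard m (Finset.univ : Finset (Fin n))).Nonempty then
    PMF.uniformOfFinset _ h
  else PMF.pure ∅

/-- Geometric distribution on `{0,1,2,…}` with `P(N = k) = γ^k (1-γ)`. -/
def geom (γ : ℝ) : PMF ℕ :=
  if h : 0 < 1 - γ ∧ 1 - γ ≤ 1 then ProbabilityTheory.geometricPMF h.1 h.2
  else PMF.pure 0

/-- Expectation of a real function under a `PMF`. -/
def pexp {α : Type*} (p : PMF α) (g : α → ℝ) : ℝ := ∑' a, (p a).toReal * g a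

variable {n d : ℕ}

/-- One inner SVRG-type update of SCSG. -/
def innerStep (f : Fin n → Vec d → ℝ) (x0 g : Vec d) (η : ℝ) (b : ℕ) (x : Vec d) :
    PMF (Vec d) :=
  (unifSubsets n b).map fun J => x - η • (gradBatch f J x - gradBatch f J x0 + g)

/-- `k` inner SVRG-type updates of SCSG started at `x`. -/
def innerIter (f : Fin n → Vec d → ℝ) (x0 g : Vec d) (η : ℝ) (b : ℕ) :
    ℕ → Vec d → PMF (Vec d)
  | 0, x => PMF.pure x
  | k + 1, x => (innerStep f x0 g η b x).bind (innerIter f x0 g η b k)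

/-- One epoch of SCSG started at `xp`, returning the batch `I_j` together with `x̃_j`. -/
def epochFull (f : Fin n → Vec d → ℝ) (η : ℝ) (B b : ℕ) (xp : Vec d) :
    PMF (Finset (Fin n) × Vec d) :=
  (unifSubsets n B).bind fun I =>
    ((geom ((B : ℝ) / (B + b))).bind fun N =>
      innerIter f xp (gradBatch f I xp) η b N xp).map fun y => (I, y)

/-- One epoch of SCSG, returning `x̃_j`. -/
def epoch (f : Fin n → Vec d → ℝ) (η : ℝ) (B b : ℕ) (xp : Vec d) : PMF (Vec d) :=
  (epochFull f η B b xp).map Prod.snd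

/-- Law of `x̃_j` (the iterate after `j` epochs), for stepsizes `η`, batch sizes `B`,
mini-batch sizes `b` (epoch `j` uses `η j`, `B j`, `b j`). -/
def marg (f : Fin n → Vec d → ℝ) (η : ℕ → ℝ) (B b : ℕ → ℕ) (x0 : Vec d) :
    ℕ → PMF (Vec d)
  | 0 => PMF.pure x0
  | j + 1 => (marg f η B b x0 j).bind (epoch f (η (j + 1)) (B (j + 1)) (b (j + 1)))

/-- Joint law of `(x̃_j, x̃_{j+1})`. -/
def pairPMF (f : Fin n → Vec d → ℝ) (η : ℕ → ℝ) (B b : ℕ → ℕ) (x0 : Vec d) (j : ℕ) :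
    PMF (Vec d × Vec d) :=
  (marg f η B b x0 j).bind fun x =>
    (epoch f (η (j + 1)) (B (j + 1)) (b (j + 1)) x).map fun y => (x, y)

/-- Joint law of `(x̃_j, I_{j+1}, x̃_{j+1})`. -/
def triplePMF (f : Fin n → Vec d → ℝ) (η : ℕ → ℝ) (B b : ℕ → ℕ) (x0 : Vec d) (j : ℕ) :
    PMF (Vec d × Finset (Fin n) × Vec d) :=
  (marg f η B b x0 j).bind fun x =>
    (epochFull f (η (j + 1)) (B (j + 1)) (b (j + 1)) x).map fun Iy => (x, Iy)

end SCSG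

namespace PMF

open Finset

variable {α β : Type*}

/-- Expectation of an `ℝ≥0∞`-valued function. Unlike `pexp`, whose `tsum` is `0` off summable
functions, it needs no summability, and the iterates of SCSG have infinite support. -/
def lexp (p : PMF α) (g : α → ℝ≥0∞) : ℝ≥0∞ := ∑' a, p a * g a

theorem lexp_pure (a : α) (g : α → ℝ≥0∞) : (pure a).lexp g = g a := by
  rw [lexp, tsum_eq_single a fun b hb => by simp [pure_apply, hb]]
  simp

theorem lexp_bind (p : PMF α) (K : α → PMF β) (g : β → ℝ≥0∞) :
    (p.bind K).lexp g = p.lexp fun a => (K a).lexp g := by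
  simp only [lexp, bind_apply, ← ENNReal.tsum_mul_right, ← ENNReal.tsum_mul_left, mul_assoc]
  exact ENNReal.tsum_comm

theorem lexp_map (p : PMF α) (h : α → β) (g : β → ℝ≥0∞) :
    (p.map h).lexp g = p.lexp (g ∘ h) := by
  simp only [map, lexp_bind, Function.comp_apply, lexp_pure]
  rfl

theorem lexp_mono (p : PMF α) {g h : α → ℝ≥0∞} (hgh : ∀ a, g a ≤ h a) :
    p.lexp g ≤ p.lexp h :=
  ENNReal.tsum_le_tsum fun a => mul_le_mul_right (hgh a) _

theorem lexp_const_mul (p : PMF α) (c : ℝ≥0∞) (g : α → ℝ≥0∞) :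
    p.lexp (fun a => c * g a) = c * p.lexp g := by
  simp only [lexp, ← ENNReal.tsum_mul_left, mul_left_comm]

theorem lexp_finsetSum {ι : Type*} (p : PMF α) (s : Finset ι) (g : ι → α → ℝ≥0∞) :
    p.lexp (fun a => ∑ i ∈ s, g i a) = ∑ i ∈ s, p.lexp (g i) := by
  simp only [lexp, mul_sum]
  exact Summable.tsum_finsetSum fun _ _ => ENNReal.summable

theorem lexp_uniformOfFinset (s : Finset α) (hs : s.Nonempty) (g : α → ℝ≥0∞) :
    (uniformOfFinset s hs).lexp g = ∑ a ∈ s, (#s : ℝ≥0∞)⁻¹ * g a := by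
  rw [lexp, tsum_eq_sum (s := s) fun a ha => by
    rw [uniformOfFinset_apply_of_notMem hs ha, zero_mul]]
  exact sum_congr rfl fun a ha => by rw [uniformOfFinset_apply_of_mem hs ha]

end PMF

section InnerProduct

open scoped RealInnerProductSpace

variable {E : Type*} [NormedAddCommGroup E] [InnerProductSpace ℝ E]

theorem image_add_le_of_lipschitz_gradient [CompleteSpace E] {F : E → ℝ} {L : ℝ}
    (hF : Differentiable ℝ F) (hlip : ∀ a b, ‖gradient F a - gradient F b‖ ≤ L * ‖a - b‖)
    (x u : E) : F (x + u) ≤ F x + ⟪gradient F x, u⟫ + L / 2 * ‖u‖ ^ 2 := by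
  let g : ℝ → ℝ := fun s => F (x + s • u) - s * ⟪gradient F x, u⟫ - L / 2 * s ^ 2 * ‖u‖ ^ 2
  have hg : ∀ s, HasDerivAt g
      (⟪gradient F (x + s • u), u⟫ - ⟪gradient F x, u⟫ - L * s * ‖u‖ ^ 2) s := by
    intro s
    have hline : HasDerivAt (fun s : ℝ => x + s • u) u s := by
      simpa using ((hasDerivAt_id s).smul_const u).const_add x
    have hFs := ((hF (x + s • u)).hasGradientAt.hasFDerivAt).comp_hasDerivAt s hline
    have hsq := ((hasDerivAt_pow 2 s).const_mul (L / 2)).mul_const (‖u‖ ^ 2)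
    refine ((hFs.sub ((hasDerivAt_id s).mul_const ⟪gradient F x, u⟫)).sub hsq).congr_deriv ?_
    simp only [InnerProductSpace.toDual_apply_apply]
    ring
  have hanti : AntitoneOn g (Set.Icc 0 1) := by
    refine antitoneOn_of_deriv_nonpos (convex_Icc 0 1)
      (continuous_iff_continuousAt.2 fun s => (hg s).continuousAt).continuousOn
      (fun s _ => (hg s).differentiableAt.differentiableWithinAt) fun s hs => ?_
    rw [interior_Icc] at hs
    rw [(hg s).deriv, sub_nonpos, ← inner_sub_left]
    calc ⟪gradient F (x + s • u) - gradient F x, u⟫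
        ≤ ‖gradient F (x + s • u) - gradient F x‖ * ‖u‖ := real_inner_le_norm _ _
      _ ≤ L * ‖s • u‖ * ‖u‖ := by
          gcongr
          simpa using hlip (x + s • u) x
      _ = L * s * ‖u‖ ^ 2 := by rw [norm_smul, Real.norm_of_nonneg hs.1.le]; ring
  have h01 := hanti (Set.left_mem_Icc.2 zero_le_one) (Set.right_mem_Icc.2 zero_le_one) zero_le_one
  simp only [g, zero_smul, one_smul, add_zero] at h01
  linarith

theorem sum_norm_sq_eq_card_mul_add_sum_norm_sub_sq {ι : Type*} [Fintype ι] (v : ι → E) (m : E)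
    (hm : ∑ i, v i = (Fintype.card ι : ℝ) • m) :
    ∑ i, ‖v i‖ ^ 2 = Fintype.card ι * ‖m‖ ^ 2 + ∑ i, ‖v i - m‖ ^ 2 := by
  have hinner : ∑ i, ⟪v i, m⟫ = Fintype.card ι * ‖m‖ ^ 2 := by
    rw [← sum_inner, hm, real_inner_smul_left, real_inner_self_eq_norm_sq]
  simp only [norm_sub_sq_real, Finset.sum_add_distrib, Finset.sum_sub_distrib, ← Finset.mul_sum,
    hinner, Finset.sum_const, Finset.card_univ, nsmul_eq_mul]
  ring

theorem neg_two_mul_inner_le (a b : E) {c : ℝ} (hc : 0 < c) :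
    -(2 * ⟪a, b⟫) ≤ c * ‖a‖ ^ 2 + c⁻¹ * ‖b‖ ^ 2 := by
  have h := norm_add_sq_real (c • a) b
  rw [real_inner_smul_left, norm_smul, Real.norm_of_nonneg hc.le] at h
  have hc' : c * (c * ‖a‖ ^ 2 + c⁻¹ * ‖b‖ ^ 2 + 2 * ⟪a, b⟫) = ‖c • a + b‖ ^ 2 := by
    rw [h]; field_simp; ring
  nlinarith [sq_nonneg ‖c • a + b‖]

end InnerProduct

namespace SCSG

open Finset PMF
open scoped RealInnerProductSpace

variable {n d : ℕ}

section Expectation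

variable {α : Type*}

theorem pexp_le_of_lexp_le {p : PMF α} {g : α → ℝ} (hg : ∀ a, 0 ≤ g a) {C : ℝ} (hC : 0 ≤ C)
    (h : p.lexp (fun a => ENNReal.ofReal (g a)) ≤ ENNReal.ofReal C) : pexp p g ≤ C := by
  by_cases hs : Summable fun a => (p a).toReal * g a
  · refine hs.tsum_le_of_sum_le fun s => ?_
    have hfin : ∀ a ∈ s, p a * ENNReal.ofReal (g a) ≠ ⊤ := fun a _ =>
      ENNReal.mul_ne_top (p.apply_ne_top a) ENNReal.ofReal_ne_top
    calc ∑ a ∈ s, (p a).toReal * g a = (∑ a ∈ s, p a * ENNReal.ofReal (g a)).toReal := by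
          rw [ENNReal.toReal_sum hfin]
          simp only [ENNReal.toReal_mul, ENNReal.toReal_ofReal (hg _)]
      _ ≤ C := ENNReal.toReal_le_of_le_ofReal hC ((ENNReal.sum_le_tsum s).trans h)
  · rw [pexp, tsum_eq_zero_of_not_summable hs]
    exact hC

theorem geom_apply {r : ℝ} (hr0 : 0 ≤ r) (hr1 : r < 1) (k : ℕ) :
    geom r k = ENNReal.ofReal (r ^ k * (1 - r)) := by
  rw [geom, dif_pos ⟨by linarith, by linarith⟩]
  show ENNReal.ofReal ((1 - (1 - r)) ^ k * (1 - r)) = _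
  rw [sub_sub_cancel]

theorem tsum_pow_succ_mul_lexp_iterate_le (K : α → PMF α) (p : ℕ → α → PMF α)
    (hp0 : ∀ z, p 0 z = PMF.pure z) (hp : ∀ k z, p (k + 1) z = (K z).bind (p k))
    {S φ : α → ℝ≥0∞} {ρ : ℝ≥0∞} (hK : ∀ z, ρ * (φ z + (K z).lexp S) ≤ S z) (z : α) :
    ∑' k, ρ ^ (k + 1) * (p k z).lexp φ ≤ S z := by
  refine ENNReal.tsum_le_of_sum_range_le fun N => ?_
  induction N generalizing z with
  | zero => simp
  | succ N ih =>
    calc ∑ k ∈ range (N + 1), ρ ^ (k + 1) * (p k z).lexp φ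
        = ρ * (φ z + (K z).lexp fun w => ∑ k ∈ range N, ρ ^ (k + 1) * (p k w).lexp φ) := by
          simp only [sum_range_succ', hp, hp0, lexp_bind, lexp_pure, lexp_finsetSum,
            lexp_const_mul, pow_succ, mul_add, mul_sum, pow_zero, one_mul]
          rw [add_comm]
          congr 1
          exact sum_congr rfl fun k _ => by ac_rfl
      _ ≤ ρ * (φ z + (K z).lexp S) := by gcongr; exact lexp_mono _ ih
      _ ≤ S z := hK z

theorem lexp_geom_bind_iterate_le (K : α → PMF α) (p : ℕ → α → PMF α)
    (hp0 : ∀ z, p 0 z = PMF.pure z) (hp : ∀ k z, p (k + 1) z = (K z).bind (p k))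
    {S φ : α → ℝ≥0∞} {c : ℝ} (hc : 1 < c)
    (hK : ∀ z, φ z + (K z).lexp S ≤ ENNReal.ofReal c * S z) (z : α) :
    ((geom c⁻¹).bind fun N => p N z).lexp φ ≤ ENNReal.ofReal (c - 1) * S z := by
  have hc0 : 0 < c := by linarith
  have hρc : ENNReal.ofReal c⁻¹ * ENNReal.ofReal c = 1 := by
    rw [← ENNReal.ofReal_mul (by positivity), inv_mul_cancel₀ hc0.ne', ENNReal.ofReal_one]
  have hgeom : ∀ N, geom c⁻¹ N = ENNReal.ofReal (c - 1) * ENNReal.ofReal c⁻¹ ^ (N + 1) := by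
    intro N
    rw [geom_apply (by positivity) (inv_lt_one_of_one_lt₀ hc), ← ENNReal.ofReal_pow (by positivity),
      ← ENNReal.ofReal_mul (by linarith)]
    have h1c : 1 - c⁻¹ = (c - 1) * c⁻¹ := by rw [sub_mul, mul_inv_cancel₀ hc0.ne', one_mul]
    rw [h1c, pow_succ]
    congr 1
    ring
  calc ((geom c⁻¹).bind fun N => p N z).lexp φ
      = ENNReal.ofReal (c - 1) * ∑' N, ENNReal.ofReal c⁻¹ ^ (N + 1) * (p N z).lexp φ := by
        rw [lexp_bind]
        simp only [lexp, hgeom, ← ENNReal.tsum_mul_left, mul_assoc]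
    _ ≤ ENNReal.ofReal (c - 1) * S z := by
        gcongr
        refine tsum_pow_succ_mul_lexp_iterate_le K p hp0 hp (fun w => ?_) z
        calc ENNReal.ofReal c⁻¹ * (φ w + (K w).lexp S)
            ≤ ENNReal.ofReal c⁻¹ * (ENNReal.ofReal c * S w) := by gcongr; exact hK w
          _ = S w := by rw [← mul_assoc, hρc, one_mul]

end Expectation

section Objective

variable (f : Fin n → Vec d → ℝ)

theorem hasGradientAt_avg (hdiff : ∀ i, Differentiable ℝ (f i)) (x : Vec d) :
    HasGradientAt (avg n d f) ((n : ℝ)⁻¹ • ∑ i, gradient (f i) x) x := by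
  have hsum : HasFDerivAt (fun y => ∑ i, f i y)
      (∑ i, InnerProductSpace.toDual ℝ (Vec d) (gradient (f i) x)) x :=
    HasFDerivAt.fun_sum fun i _ => (hdiff i x).hasGradientAt.hasFDerivAt
  have havg : HasFDerivAt (avg n d f)
      ((n : ℝ)⁻¹ • ∑ i, InnerProductSpace.toDual ℝ (Vec d) (gradient (f i) x)) x := by
    have : avg n d f = fun y => (n : ℝ)⁻¹ * ∑ i, f i y := funext fun y => div_eq_inv_mul _ _
    exact this ▸ hsum.const_mul (n : ℝ)⁻¹
  rw [hasGradientAt_iff_hasFDerivAt, map_smul, map_sum]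
  exact havg

theorem gradient_avg (hdiff : ∀ i, Differentiable ℝ (f i)) (x : Vec d) :
    gradient (avg n d f) x = (n : ℝ)⁻¹ • ∑ i, gradient (f i) x :=
  (hasGradientAt_avg f hdiff x).gradient

theorem differentiable_avg (hdiff : ∀ i, Differentiable ℝ (f i)) : Differentiable ℝ (avg n d f) :=
  fun x => (hasGradientAt_avg f hdiff x).differentiableAt

theorem natCast_smul_gradient_avg (hdiff : ∀ i, Differentiable ℝ (f i)) (x : Vec d) :
    (n : ℝ) • gradient (avg n d f) x = ∑ i, gradient (f i) x := by
  rcases n.eq_zero_or_pos with rfl | hn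
  · simp
  · rw [gradient_avg f hdiff, smul_inv_smul₀ (by positivity)]

theorem gradBatch_univ (hdiff : ∀ i, Differentiable ℝ (f i)) (x : Vec d) :
    gradBatch f univ x = gradient (avg n d f) x := by
  rw [gradient_avg f hdiff, gradBatch, card_univ, Fintype.card_fin]

theorem norm_gradient_avg_sub_le (hn : 0 < n) {L : ℝ} (hdiff : ∀ i, Differentiable ℝ (f i))
    (hlip : ∀ i (x y : Vec d), ‖gradient (f i) x - gradient (f i) y‖ ≤ L * ‖x - y‖)
    (a b : Vec d) : ‖gradient (avg n d f) a - gradient (avg n d f) b‖ ≤ L * ‖a - b‖ := by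
  have hnR : (0 : ℝ) < n := by positivity
  rw [← mul_le_mul_iff_of_pos_left hnR, ← abs_of_pos hnR, ← Real.norm_eq_abs, ← norm_smul,
    smul_sub, natCast_smul_gradient_avg f hdiff, natCast_smul_gradient_avg f hdiff,
    ← sum_sub_distrib]
  calc ‖∑ i, (gradient (f i) a - gradient (f i) b)‖
      ≤ ∑ i : Fin n, L * ‖a - b‖ := norm_sum_le_of_le _ fun i _ => hlip i a b
    _ = ‖(n : ℝ)‖ * (L * ‖a - b‖) := by simp

end Objective

section SvrgStep

variable (f : Fin n → Vec d → ℝ)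

def svrgDir (x z : Vec d) (i : Fin n) : Vec d :=
  gradient (f i) z - gradient (f i) x + gradient (avg n d f) x

variable {f}

theorem sum_svrgDir (hdiff : ∀ i, Differentiable ℝ (f i)) (x z : Vec d) :
    ∑ i, svrgDir f x z i = (n : ℝ) • gradient (avg n d f) z := by
  simp only [svrgDir, sum_add_distrib, sum_sub_distrib,
    ← natCast_smul_gradient_avg f hdiff, sum_const, card_univ, Fintype.card_fin,
    ← Nat.cast_smul_eq_nsmul ℝ]
  abel

theorem sum_norm_sq_svrgDir_le {L : ℝ} (hdiff : ∀ i, Differentiable ℝ (f i))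
    (hlip : ∀ i (x y : Vec d), ‖gradient (f i) x - gradient (f i) y‖ ≤ L * ‖x - y‖)
    (x z : Vec d) :
    ∑ i, ‖svrgDir f x z i‖ ^ 2
      ≤ n * (‖gradient (avg n d f) z‖ ^ 2 + L ^ 2 * ‖z - x‖ ^ 2) := by
  set G := gradient (avg n d f)
  set u : Fin n → Vec d := fun i => gradient (f i) z - gradient (f i) x
  have hdir := sum_norm_sq_eq_card_mul_add_sum_norm_sub_sq (svrgDir f x z) (G z)
    (by simpa using sum_svrgDir hdiff x z)
  have hu := sum_norm_sq_eq_card_mul_add_sum_norm_sub_sq u (G z - G x) (by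
    simp [u, G, smul_sub, natCast_smul_gradient_avg f hdiff])
  have hcentered : ∀ i, svrgDir f x z i - G z = u i - (G z - G x) := fun i => by
    simp only [svrgDir, u, G]; abel
  have hlipsq : ∑ i, ‖u i‖ ^ 2 ≤ n * (L ^ 2 * ‖z - x‖ ^ 2) := by
    calc ∑ i, ‖u i‖ ^ 2 ≤ ∑ _i : Fin n, (L * ‖z - x‖) ^ 2 :=
          sum_le_sum fun i _ => pow_le_pow_left₀ (norm_nonneg _) (hlip i z x) 2
      _ = n * (L ^ 2 * ‖z - x‖ ^ 2) := by simp [mul_pow]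
  simp only [Fintype.card_fin, hcentered] at hdir hu
  nlinarith [sq_nonneg ‖G z - G x‖]

theorem sum_avg_svrgStep_le (hn : 0 < n) {L : ℝ} (hdiff : ∀ i, Differentiable ℝ (f i))
    (hlip : ∀ i (x y : Vec d), ‖gradient (f i) x - gradient (f i) y‖ ≤ L * ‖x - y‖)
    (x z : Vec d) (η : ℝ) :
    ∑ i, avg n d f (z - η • svrgDir f x z i)
      ≤ n * avg n d f z - η * n * ‖gradient (avg n d f) z‖ ^ 2
        + L / 2 * η ^ 2 * ∑ i, ‖svrgDir f x z i‖ ^ 2 := by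
  have hdescent : ∀ i, avg n d f (z - η • svrgDir f x z i)
      ≤ avg n d f z - η * ⟪gradient (avg n d f) z, svrgDir f x z i⟫
        + L / 2 * η ^ 2 * ‖svrgDir f x z i‖ ^ 2 := fun i => by
    have h := image_add_le_of_lipschitz_gradient (differentiable_avg f hdiff)
      (norm_gradient_avg_sub_le f hn hdiff hlip) z (-(η • svrgDir f x z i))
    rwa [← sub_eq_add_neg, inner_neg_right, real_inner_smul_right, norm_neg, norm_smul, mul_pow,
      Real.norm_eq_abs, sq_abs, ← sub_eq_add_neg, ← mul_assoc] at h
  have hinner : ∑ i, ⟪gradient (avg n d f) z, svrgDir f x z i⟫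
      = n * ‖gradient (avg n d f) z‖ ^ 2 := by
    rw [← inner_sum, sum_svrgDir hdiff, real_inner_smul_right, real_inner_self_eq_norm_sq]
  calc ∑ i, avg n d f (z - η • svrgDir f x z i)
      ≤ ∑ i, (avg n d f z - η * ⟪gradient (avg n d f) z, svrgDir f x z i⟫
        + L / 2 * η ^ 2 * ‖svrgDir f x z i‖ ^ 2) := sum_le_sum fun i _ => hdescent i
    _ = _ := by
        simp only [sum_add_distrib, sum_sub_distrib, ← mul_sum, hinner,
          sum_const, card_univ, Fintype.card_fin, nsmul_eq_mul]
        ring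

theorem sum_norm_sq_svrgStep_sub (hdiff : ∀ i, Differentiable ℝ (f i)) (x z : Vec d) (η : ℝ) :
    ∑ i, ‖z - η • svrgDir f x z i - x‖ ^ 2
      = n * ‖z - x‖ ^ 2 - 2 * η * n * ⟪z - x, gradient (avg n d f) z⟫
        + η ^ 2 * ∑ i, ‖svrgDir f x z i‖ ^ 2 := by
  have hinner : ∑ i, ⟪z - x, svrgDir f x z i⟫ = n * ⟪z - x, gradient (avg n d f) z⟫ := by
    rw [← inner_sum, sum_svrgDir hdiff, real_inner_smul_right]
  have hexpand : ∀ i, ‖z - η • svrgDir f x z i - x‖ ^ 2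
      = ‖z - x‖ ^ 2 - 2 * η * ⟪z - x, svrgDir f x z i⟫ + η ^ 2 * ‖svrgDir f x z i‖ ^ 2 :=
    fun i => by
      rw [sub_right_comm, norm_sub_sq_real, real_inner_smul_right, norm_smul, mul_pow,
        Real.norm_eq_abs, sq_abs]
      ring
  simp only [hexpand, sum_add_distrib, sum_sub_distrib, ← mul_sum, hinner,
    sum_const, card_univ, Fintype.card_fin, nsmul_eq_mul]
  ring

end SvrgStep

section Lyapunov

variable (f : Fin n → Vec d → ℝ)

def lyapunov (xstar x : Vec d) (Λ : ℝ) (y : Vec d) : ℝ :=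
  avg n d f y - avg n d f xstar + Λ * ‖y - x‖ ^ 2

variable {f}

theorem lyapunov_nonneg {xstar : Vec d} (hmin : ∀ x : Vec d, avg n d f xstar ≤ avg n d f x)
    (x : Vec d) {Λ : ℝ} (hΛ : 0 ≤ Λ) (y : Vec d) : 0 ≤ lyapunov f xstar x Λ y :=
  add_nonneg (sub_nonneg.2 (hmin y)) (by positivity)

/-- The coefficients of `‖z - x‖²` and `‖∇f z‖²` in the one-step estimate of the Lyapunov
function with weight `Λ = γ² t L`. -/
theorem lyapunov_coeffs_le {L γ t η : ℝ} (hL : 0 < L) (hγ : 0 < γ) (hγ13 : γ ≤ 1 / 3)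
    (ht : 0 < t) (ht12 : t ≤ 1 / 2) (hη : η * L = γ * t ^ 2) :
    γ ^ 2 * t * L * η * L * t + (L / 2 * η ^ 2 + γ ^ 2 * t * L * η ^ 2) * L ^ 2
        ≤ t ^ 3 * (γ ^ 2 * t * L) ∧
      γ ^ 2 * t * L * η * (L * t)⁻¹ + (L / 2 * η ^ 2 + γ ^ 2 * t * L * η ^ 2) ≤ η / 2 := by
  have hη' : η = γ * t ^ 2 / L := by rw [← hη, mul_div_cancel_right₀ _ hL.ne']
  have hγt : γ * t ≤ 1 / 6 := by nlinarith [mul_le_mul hγ13 ht12 ht.le (by norm_num)]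
  constructor
  · have key : γ + 1 / 2 + γ * (γ * t) ≤ 1 := by
      nlinarith [mul_le_mul hγ13 hγt (by positivity) (by norm_num)]
    calc _ = L * t ^ 4 * γ ^ 2 * (γ + 1 / 2 + γ * (γ * t)) := by
          rw [hη']; field_simp; ring
      _ ≤ L * t ^ 4 * γ ^ 2 * 1 := by gcongr
      _ = t ^ 3 * (γ ^ 2 * t * L) := by ring
  · have key : γ ^ 2 + γ * t ^ 2 / 2 + γ ^ 3 * t ^ 3 ≤ 1 / 2 := by
      have h3 : (γ * t) ^ 3 ≤ (1 / 6) ^ 3 := pow_le_pow_left₀ (by positivity) hγt 3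
      nlinarith [mul_le_mul hγt ht12 ht.le (by norm_num)]
    have hη0 : 0 ≤ η := by rw [hη']; positivity
    calc _ = η * (γ ^ 2 + γ * t ^ 2 / 2 + γ ^ 3 * t ^ 3) := by
          rw [hη']; field_simp; ring
      _ ≤ η * (1 / 2) := by gcongr
      _ = η / 2 := by ring

theorem sum_lyapunov_svrgStep_le (hn : 0 < n) {L γ μ t η : ℝ} (hL : 0 < L)
    (hdiff : ∀ i, Differentiable ℝ (f i))
    (hlip : ∀ i (x y : Vec d), ‖gradient (f i) x - gradient (f i) y‖ ≤ L * ‖x - y‖)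
    {xstar : Vec d}
    (hPL : ∀ x : Vec d,
      2 * μ * (avg n d f x - avg n d f xstar) ≤ ‖gradient (avg n d f) x‖ ^ 2)
    (hγ : 0 < γ) (hγ13 : γ ≤ 1 / 3) (ht : 0 < t) (ht12 : t ≤ 1 / 2) (hη : η * L = γ * t ^ 2)
    (x z : Vec d) :
    ∑ i, lyapunov f xstar x (γ ^ 2 * t * L) (z - η • svrgDir f x z i)
        + n * (t ^ 3 + η * μ) * (avg n d f z - avg n d f xstar)
      ≤ n * (1 + t ^ 3) * lyapunov f xstar x (γ ^ 2 * t * L) z := by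
  set Λ := γ ^ 2 * t * L
  have hη0 : 0 ≤ η := nonneg_of_mul_nonneg_left (hη ▸ mul_nonneg hγ.le (sq_nonneg t)) hL
  obtain ⟨hcoeff_dist, hcoeff_grad⟩ := lyapunov_coeffs_le hL hγ hγ13 ht ht12 hη
  have hsum : ∑ i, lyapunov f xstar x Λ (z - η • svrgDir f x z i)
      = ∑ i, avg n d f (z - η • svrgDir f x z i) - n * avg n d f xstar
        + Λ * ∑ i, ‖z - η • svrgDir f x z i - x‖ ^ 2 := by
    simp only [lyapunov, sum_add_distrib, sum_sub_distrib, ← mul_sum,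
      sum_const, card_univ, Fintype.card_fin, nsmul_eq_mul]
  have hvalue := sum_avg_svrgStep_le hn hdiff hlip x z η
  have hdist := sum_norm_sq_svrgStep_sub hdiff x z η
  have hdir := sum_norm_sq_svrgDir_le hdiff hlip x z
  have hyoung := neg_two_mul_inner_le (z - x) (gradient (avg n d f) z) (mul_pos hL ht)
  rw [hsum, hdist]
  simp only [lyapunov]
  linarith [mul_le_mul_of_nonneg_left hyoung (by positivity : 0 ≤ Λ * η * n),
    mul_le_mul_of_nonneg_left hdir (by positivity : 0 ≤ L / 2 * η ^ 2 + Λ * η ^ 2),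
    mul_le_mul_of_nonneg_left (hPL z) (by positivity : 0 ≤ n * η / 2),
    mul_le_mul_of_nonneg_right hcoeff_dist (by positivity : 0 ≤ n * ‖z - x‖ ^ 2),
    mul_le_mul_of_nonneg_right hcoeff_grad
      (by positivity : 0 ≤ n * ‖gradient (avg n d f) z‖ ^ 2)]

end Lyapunov

section Epoch

theorem unifSubsets_self : unifSubsets n n = PMF.pure univ := by
  have hset : powersetCard n (univ : Finset (Fin n)) = {univ} := by
    simpa using powersetCard_self (univ : Finset (Fin n))
  ext J
  rw [unifSubsets, dif_pos (hset ▸ singleton_nonempty _), PMF.uniformOfFinset_apply,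
    PMF.pure_apply]
  simp [hset]

theorem gradBatch_singleton (f : Fin n → Vec d → ℝ) (i : Fin n) (x : Vec d) :
    gradBatch f {i} x = gradient (f i) x := by
  simp [gradBatch]

theorem lexp_innerStep_one (hn : 0 < n) (f : Fin n → Vec d → ℝ) (x0 g z : Vec d) (η : ℝ)
    (h : Vec d → ℝ≥0∞) :
    (innerStep f x0 g η 1 z).lexp h
      = ∑ i, (n : ℝ≥0∞)⁻¹ * h (z - η • (gradient (f i) z - gradient (f i) x0 + g)) := by
  have hne : (powersetCard 1 (univ : Finset (Fin n))).Nonempty :=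
    powersetCard_nonempty.2 (by simpa using Nat.one_le_iff_ne_zero.2 hn.ne')
  rw [innerStep, unifSubsets, dif_pos hne, lexp_map, lexp_uniformOfFinset,
    powersetCard_one, sum_map, card_map, card_univ, Fintype.card_fin]
  simp [gradBatch_singleton]

theorem epoch_fullBatch (hn : 0 < n) (f : Fin n → Vec d → ℝ)
    (hdiff : ∀ i, Differentiable ℝ (f i)) (η : ℝ) (x : Vec d) :
    epoch f η n 1 x = (geom (1 + (n : ℝ)⁻¹)⁻¹).bind
      fun N => innerIter f x (gradient (avg n d f) x) η 1 N x := by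
  have hgeom : (n : ℝ) / (n + (1 : ℕ)) = (1 + (n : ℝ)⁻¹)⁻¹ := by
    have : (n : ℝ) ≠ 0 := by positivity
    field_simp
    push_cast
    ring
  rw [epoch, epochFull, unifSubsets_self, PMF.pure_bind, PMF.map_comp, hgeom,
    gradBatch_univ f hdiff]
  exact PMF.map_id _

end Epoch

section EpochBound

variable {f : Fin n → Vec d → ℝ}

theorem ofReal_add_lexp_innerStep_le (hn : 0 < n) {L γ μ t η : ℝ} (hL : 0 < L) (hμ : 0 ≤ μ)
    (hdiff : ∀ i, Differentiable ℝ (f i))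
    (hlip : ∀ i (x y : Vec d), ‖gradient (f i) x - gradient (f i) y‖ ≤ L * ‖x - y‖)
    {xstar : Vec d} (hmin : ∀ x : Vec d, avg n d f xstar ≤ avg n d f x)
    (hPL : ∀ x : Vec d,
      2 * μ * (avg n d f x - avg n d f xstar) ≤ ‖gradient (avg n d f) x‖ ^ 2)
    (hγ : 0 < γ) (hγ13 : γ ≤ 1 / 3) (ht : 0 < t) (ht12 : t ≤ 1 / 2) (hη : η * L = γ * t ^ 2)
    (x z : Vec d) :
    ENNReal.ofReal (avg n d f z - avg n d f xstar)
        + (innerStep f x (gradient (avg n d f) x) η 1 z).lexp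
            (fun y => ENNReal.ofReal (lyapunov f xstar x (γ ^ 2 * t * L) y / (t ^ 3 + η * μ)))
      ≤ ENNReal.ofReal (1 + t ^ 3)
        * ENNReal.ofReal (lyapunov f xstar x (γ ^ 2 * t * L) z / (t ^ 3 + η * μ)) := by
  set V := lyapunov f xstar x (γ ^ 2 * t * L)
  set κ := t ^ 3 + η * μ
  have hη0 : 0 ≤ η := nonneg_of_mul_nonneg_left (hη ▸ mul_nonneg hγ.le (sq_nonneg t)) hL
  have hκ : 0 < κ := add_pos_of_pos_of_nonneg (pow_pos ht 3) (mul_nonneg hη0 hμ)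
  have hnκ : 0 < n * κ := mul_pos (by positivity) hκ
  have hV : ∀ y, 0 ≤ V y / (n * κ) := fun y =>
    div_nonneg (lyapunov_nonneg hmin x (by positivity) y) hnκ.le
  have hstep := sum_lyapunov_svrgStep_le hn hL hdiff hlip hPL hγ hγ13 ht ht12 hη x z
  have hterm : ∀ i, (n : ℝ≥0∞)⁻¹ * ENNReal.ofReal (V (z - η • svrgDir f x z i) / κ)
      = ENNReal.ofReal (V (z - η • svrgDir f x z i) / (n * κ)) := fun i => by
    rw [← ENNReal.ofReal_natCast, ← ENNReal.ofReal_inv_of_pos (by positivity),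
      ← ENNReal.ofReal_mul (by positivity), inv_mul_eq_div, div_div, mul_comm κ]
  rw [lexp_innerStep_one hn]
  change _ + ∑ i, (n : ℝ≥0∞)⁻¹ * ENNReal.ofReal (V (z - η • svrgDir f x z i) / κ) ≤ _
  rw [sum_congr rfl fun i _ => hterm i,
    ← ENNReal.ofReal_sum_of_nonneg fun i _ => hV _,
    ← ENNReal.ofReal_add (sub_nonneg.2 (hmin z)) (sum_nonneg fun i _ => hV _),
    ← ENNReal.ofReal_mul (by positivity)]
  refine ENNReal.ofReal_le_ofReal ?_
  calc avg n d f z - avg n d f xstar + ∑ i, V (z - η • svrgDir f x z i) / (n * κ)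
      = (∑ i, V (z - η • svrgDir f x z i) + n * κ * (avg n d f z - avg n d f xstar))
          / (n * κ) := by rw [← sum_div]; field_simp; ring
    _ ≤ n * (1 + t ^ 3) * V z / (n * κ) := div_le_div_of_nonneg_right hstep hnκ.le
    _ = (1 + t ^ 3) * (V z / κ) := by field_simp

theorem lexp_epoch_le (hn : 0 < n) {L γ μ t η : ℝ} (hL : 0 < L) (hμ : 0 ≤ μ)
    (hdiff : ∀ i, Differentiable ℝ (f i))
    (hlip : ∀ i (x y : Vec d), ‖gradient (f i) x - gradient (f i) y‖ ≤ L * ‖x - y‖)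
    {xstar : Vec d} (hmin : ∀ x : Vec d, avg n d f xstar ≤ avg n d f x)
    (hPL : ∀ x : Vec d,
      2 * μ * (avg n d f x - avg n d f xstar) ≤ ‖gradient (avg n d f) x‖ ^ 2)
    (hγ : 0 < γ) (hγ13 : γ ≤ 1 / 3) (ht : 0 < t) (ht12 : t ≤ 1 / 2) (htn : t ^ 3 = (n : ℝ)⁻¹)
    (hη : η * L = γ * t ^ 2) (x : Vec d) :
    (epoch f η n 1 x).lexp (fun y => ENNReal.ofReal (avg n d f y - avg n d f xstar))
      ≤ ENNReal.ofReal (t ^ 3 / (t ^ 3 + η * μ) * (avg n d f x - avg n d f xstar)) := by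
  rw [epoch_fullBatch hn f hdiff, ← htn]
  refine (lexp_geom_bind_iterate_le _ _ (fun _ => rfl) (fun _ _ => rfl)
    (lt_add_of_pos_right 1 (pow_pos ht 3))
    (ofReal_add_lexp_innerStep_le hn hL hμ hdiff hlip hmin hPL hγ hγ13 ht ht12 hη x) x).trans_eq ?_
  rw [add_sub_cancel_left, ← ENNReal.ofReal_mul (by positivity)]
  congr 1
  simp only [lyapunov, sub_self, norm_zero]
  ring

theorem lexp_marg_le_pow_mul {η : ℝ} {B b : ℕ} {φ : Vec d → ℝ≥0∞} {c : ℝ≥0∞}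
    (h : ∀ x, (epoch f η B b x).lexp φ ≤ c * φ x) (x0 : Vec d) (T : ℕ) :
    (marg f (fun _ => η) (fun _ => B) (fun _ => b) x0 T).lexp φ ≤ c ^ T * φ x0 := by
  induction T with
  | zero => simp [marg, lexp_pure]
  | succ T ih =>
    calc (marg f (fun _ => η) (fun _ => B) (fun _ => b) x0 (T + 1)).lexp φ
        ≤ (marg f (fun _ => η) (fun _ => B) (fun _ => b) x0 T).lexp fun x => c * φ x := by
          rw [marg, lexp_bind]
          exact lexp_mono _ h
      _ ≤ c ^ (T + 1) * φ x0 := by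
          rw [lexp_const_mul, pow_succ', mul_assoc]
          gcongr

end EpochBound

theorem epoch_factor_le {L γ μ s η : ℝ} (hL : 0 < L) (hγ : 0 < γ) (hμ : 0 ≤ μ) (hs : 0 < s)
    (hη : η * L = γ * s⁻¹ ^ 2) :
    s⁻¹ ^ 3 / (s⁻¹ ^ 3 + η * μ) ≤ 5 * L / (μ * γ * s + 5 * L) := by
  have hη' : η = γ * s⁻¹ ^ 2 / L := by rw [← hη, mul_div_cancel_right₀ _ hL.ne']
  rw [hη', div_le_div_iff₀ (by positivity) (by positivity)]
  field_simp
  nlinarith [mul_nonneg (mul_nonneg hμ hγ.le) (mul_nonneg hL.le hs.le)]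

/-- **SVRG-type instance of the P-L bound (consequence of Theorem 3).**
Under Assumption A1 and the P-L condition with constant `μ > 0`, run SCSG with `B_j ≡ n`,
`b_j ≡ 1` and `η_j L = γ n^{-2/3}` for some `0 < γ ≤ 1/3`, with `n ≥ 8`.  Then
`E(f(x̃_T) − f*) ≤ (5L/(μ γ n^{1/3} + 5L))^T·Δ_f`. -/
theorem scsg_PL_svrg_instance
    (d n : ℕ) (f : Fin n → Vec d → ℝ) (L γ μ : ℝ) (hL : 0 < L) (hμ : 0 < μ)
    (hn8 : 8 ≤ n)
    (hdiff : ∀ i, Differentiable ℝ (f i))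
    (hlip : ∀ i (x y : Vec d), ‖gradient (f i) x - gradient (f i) y‖ ≤ L * ‖x - y‖)
    (xstar : Vec d) (hmin : ∀ x : Vec d, avg n d f xstar ≤ avg n d f x)
    (hPL : ∀ x : Vec d,
      2 * μ * (avg n d f x - avg n d f xstar) ≤ ‖gradient (avg n d f) x‖ ^ 2)
    (x0 : Vec d) (ηc : ℝ)
    (hγ : 0 < γ) (hγ13 : γ ≤ 1 / 3)
    (hstep : ηc * L = γ * (n : ℝ) ^ (-(2 / 3) : ℝ)) :
    ∀ T : ℕ,
      pexp (marg f (fun _ => ηc) (fun _ => n) (fun _ => 1) x0 T)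
          (fun x => avg n d f x - avg n d f xstar)
        ≤ (5 * L / (μ * γ * (n : ℝ) ^ ((1 : ℝ) / 3) + 5 * L)) ^ T *
            (avg n d f x0 - avg n d f xstar) := by
  intro T
  have hn : 0 < n := by omega
  set s := (n : ℝ) ^ ((1 : ℝ) / 3)
  have hs3 : s ^ 3 = n := by
    simpa [s, one_div] using Real.rpow_inv_natCast_pow n.cast_nonneg three_ne_zero
  have hs2 : 2 ≤ s := le_of_pow_le_pow_left₀ three_ne_zero (by positivity)
    (by rw [hs3]; norm_num; exact_mod_cast hn8)
  have hη : ηc * L = γ * s⁻¹ ^ 2 := by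
    rw [hstep, ← Real.rpow_neg_one, ← Real.rpow_natCast, ← Real.rpow_mul (by positivity),
      ← Real.rpow_mul n.cast_nonneg]
    norm_num
  have hcf : 0 ≤ 5 * L / (μ * γ * s + 5 * L) := by positivity
  have hepoch : ∀ x, (epoch f ηc n 1 x).lexp
      (fun y => ENNReal.ofReal (avg n d f y - avg n d f xstar))
      ≤ ENNReal.ofReal (5 * L / (μ * γ * s + 5 * L))
        * ENNReal.ofReal (avg n d f x - avg n d f xstar) := fun x => by
    have hs12 : s⁻¹ ≤ 1 / 2 := by rw [inv_eq_one_div]; exact one_div_le_one_div_of_le two_pos hs2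
    refine (lexp_epoch_le hn hL hμ.le hdiff hlip hmin hPL hγ hγ13 (by positivity) hs12
      (by rw [inv_pow, hs3]) hη x).trans ?_
    rw [← ENNReal.ofReal_mul hcf]
    exact ENNReal.ofReal_le_ofReal (mul_le_mul_of_nonneg_right
      (epoch_factor_le hL hγ hμ.le (by positivity) hη) (sub_nonneg.2 (hmin x)))
  refine pexp_le_of_lexp_le (fun x => sub_nonneg.2 (hmin x))
    (mul_nonneg (pow_nonneg hcf T) (sub_nonneg.2 (hmin x0))) ?_
  rw [ENNReal.ofReal_mul (pow_nonneg hcf T), ENNReal.ofReal_pow hcf]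
  exact lexp_marg_le_pow_mul hepoch x0 T

end SCSG
end
end

section
/- A threshold for the function (1 + log x)/x^η (Lemma, Appendix A). Fix η > 1 and z > 0. Define g_η(x) = (1 + log x)/x^η for x > 0 and x(z) = z^{−1/η} · ( max{ (2/η) log(1/z), 2 } )^{1/(η−1)}. Then g_η(x) ≤ z for all x ≥ x(z). -/
/-!
Write `B` for the threshold, `A = max ((2/η) log (1/z)) 2` and `a = A^{1/(η-1)} ≥ 1`, so that
`B = z^{-1/η} a` and `z B^η = A a`. Since `log a ≤ a - 1` and `(1/η) log (1/z) ≤ A/2`, we get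
`1 + log B ≤ A/2 + a ≤ A a = z B^η`, i.e. the inequality holds at `x = B`. Beyond `B` the
difference `z x^η - log x` is nondecreasing: with `s = x/B ≥ 1`, the bound
`η log s ≤ s^η - 1` and `η z B^η ≥ 1` give `log s ≤ z B^η (s^η - 1)`.
-/

open Real

theorem log_sub_log_le_mul_rpow_sub {η z B x : ℝ} (hη : 0 < η) (hB : 0 < B) (hBx : B ≤ x)
    (hc : 1 ≤ η * (z * B ^ η)) : log x - log B ≤ z * x ^ η - z * B ^ η := by
  have hx : 0 < x := hB.trans_le hBx
  have hs : 0 < x / B := div_pos hx hB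
  calc log x - log B = log (x / B) := (log_div hx.ne' hB.ne').symm
    _ ≤ η * (z * B ^ η) * log (x / B) :=
      le_mul_of_one_le_left (log_nonneg ((one_le_div hB).mpr hBx)) hc
    _ = z * B ^ η * log ((x / B) ^ η) := by rw [log_rpow hs]; ring
    _ ≤ z * B ^ η * ((x / B) ^ η - 1) := by
      have hzB : 0 ≤ z * B ^ η := (pos_of_mul_pos_right (one_pos.trans_le hc) hη.le).le
      gcongr
      exact log_le_sub_one_of_pos (rpow_pos_of_pos hs η)
    _ = z * x ^ η - z * B ^ η := by
      rw [div_rpow hx.le hB.le]; field_simp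

theorem mul_rpow_neg_inv_mul_rpow {η z A : ℝ} (hη₀ : η ≠ 0) (hη₁ : η - 1 ≠ 0) (hz : 0 < z)
    (hA : 0 < A) :
    z * (z ^ (-(1 / η)) * A ^ (1 / (η - 1))) ^ η = A * A ^ (1 / (η - 1)) := by
  rw [mul_rpow (rpow_pos_of_pos hz _).le (rpow_pos_of_pos hA _).le, ← rpow_mul hz.le,
    ← rpow_mul hA.le, neg_mul, one_div_mul_cancel hη₀, rpow_neg_one,
    show 1 / (η - 1) * η = 1 + 1 / (η - 1) by field_simp; ring, rpow_add hA, rpow_one]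
  field_simp

theorem one_add_log_le_mul_rpow_threshold {η z A : ℝ} (hη : 1 < η) (hz : 0 < z) (hA : 2 ≤ A)
    (hlogz : 2 / η * log (1 / z) ≤ A) :
    1 + log (z ^ (-(1 / η)) * A ^ (1 / (η - 1))) ≤
      z * (z ^ (-(1 / η)) * A ^ (1 / (η - 1))) ^ η := by
  have ha : 1 ≤ A ^ (1 / (η - 1)) := one_le_rpow (by linarith) (one_div_nonneg.mpr (by linarith))
  have hloga := log_le_sub_one_of_pos (show 0 < A ^ (1 / (η - 1)) by linarith)
  have hlogz' : log (z ^ (-(1 / η))) = 2 / η * log (1 / z) / 2 := by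
    rw [log_rpow hz, one_div z, log_inv]; ring
  rw [log_mul (rpow_pos_of_pos hz _).ne' (by positivity), hlogz',
    mul_rpow_neg_inv_mul_rpow (by positivity) (by linarith) hz (by linarith)]
  nlinarith

/-- **A threshold for the function `(1 + log x)/x^η` (Appendix A).**
Fix `η > 1` and `z > 0`, and let
`x(z) = z^{−1/η}·(max{(2/η) log(1/z), 2})^{1/(η−1)}`.  Then
`(1 + log x)/x^η ≤ z` for all `x ≥ x(z)`. -/
theorem log_threshold (η z x : ℝ) (hη : 1 < η) (hz : 0 < z)
    (hx : z ^ (-(1 / η)) * (max ((2 / η) * Real.log (1 / z)) 2) ^ (1 / (η - 1)) ≤ x) :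
    (1 + Real.log x) / x ^ η ≤ z := by
  set A := max ((2 / η) * log (1 / z)) 2
  have hA : 2 ≤ A := le_max_right _ _
  set B := z ^ (-(1 / η)) * A ^ (1 / (η - 1))
  have hB : 0 < B := mul_pos (rpow_pos_of_pos hz _) (rpow_pos_of_pos (by linarith) _)
  have hzB : 2 ≤ z * B ^ η := by
    rw [mul_rpow_neg_inv_mul_rpow (by positivity) (by linarith) hz (by linarith)]
    nlinarith [one_le_rpow (by linarith : 1 ≤ A) (one_div_nonneg.mpr (by linarith : 0 ≤ η - 1))]
  have hlogB : 1 + log B ≤ z * B ^ η :=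
    one_add_log_le_mul_rpow_threshold hη hz hA (le_max_left _ _)
  have hmono := log_sub_log_le_mul_rpow_sub (η := η) (z := z) (by linarith) hB hx
    (by nlinarith)
  rw [div_le_iff₀ (rpow_pos_of_pos (hB.trans_le hx) η)]
  linarith
end
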